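/- arXiv:2403.10476 — 2 statements merged into one kernel-verified Lean document; each statement's English description precedes it below -/
import Mathlib

section
/- Let A₁, …, A_h ∈ ℝ^{d×d} be matrices with Σᵢ rank(Aᵢ) ≤ d, and suppose there exist indices m ≠ m' and a row index k such that the k-th row of A_m is nonzero and lies in the row space of A_{m'}. Then there exists a nonzero vector x ∈ ℝ^d with Aᵢ x = 0 for every i = 1, …, h. -/
open Matrix

/-- The row space of a matrix: the span of its rows, i.e. the range of `x ↦ Aᵀ x`. -/
def rowSpace {m n : ℕ} (A : Matrix (Fin m) (Fin n) ℝ) : Submodule ℝ (Fin n → ℝ) :=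
  LinearMap.range (Matrix.mulVecLin Aᵀ)

/-!
Stack the `A i` into one tall matrix `B`: its kernel is the common kernel of the `A i` and its
row space is `⨆ i, rowSpace (A i)`. The nonzero row `A m k` lies in
`rowSpace (A m) ⊓ rowSpace (A m')`, so by `dim (U ⊔ W) + dim (U ⊓ W) = dim U + dim W` the
dimension of that supremum is strictly below `∑ i, rank (A i) ≤ d`. Hence `rank B < d`, and
rank–nullity gives a nonzero vector in the kernel of `B`.
-/

open Module Submodule

namespace Submodule

variable {K M ι : Type*} [DivisionRing K] [AddCommGroup M] [Module K M] [FiniteDimensional K M]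

theorem finrank_biSup_le_sum (s : Finset ι) (V : ι → Submodule K M) :
    finrank K ↥(⨆ i ∈ s, V i) ≤ ∑ i ∈ s, finrank K (V i) := by
  classical
  induction s using Finset.induction with
  | empty => simp
  | insert a s ha ih =>
    rw [Finset.iSup_insert, Finset.sum_insert ha]
    exact (finrank_add_le_finrank_add_finrank _ _).trans (Nat.add_le_add_left ih _)

theorem finrank_iSup_lt_sum_of_inf_ne_bot [Fintype ι] [DecidableEq ι] (V : ι → Submodule K M)
    {m m' : ι} (hne : m ≠ m') (hV : V m ⊓ V m' ≠ ⊥) :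
    finrank K ↥(⨆ i, V i) < ∑ i, finrank K (V i) := by
  set W := ⨆ i ∈ Finset.univ.erase m, V i
  have hsup : (⨆ i, V i) = V m ⊔ W := by
    rw [← Finset.iSup_insert, Finset.insert_erase (Finset.mem_univ m)]
    simp only [Finset.mem_univ, iSup_pos]
  have hinf : V m ⊓ W ≠ ⊥ := ne_bot_of_le_ne_bot hV <| inf_le_inf_left _ <|
    le_biSup V (Finset.mem_erase.2 ⟨hne.symm, Finset.mem_univ m'⟩)
  have hW : finrank K W ≤ _ := finrank_biSup_le_sum (Finset.univ.erase m) V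
  have hdim := finrank_sup_add_finrank_inf_eq (V m) W
  have hinf_pos := Submodule.finrank_eq_zero.not.2 hinf
  rw [hsup, ← Finset.add_sum_erase _ _ (Finset.mem_univ m)]
  omega

end Submodule

namespace Matrix

theorem exists_mulVec_eq_zero_of_rank_lt {K m n : Type*} [Field K] [Fintype n]
    (B : Matrix m n K) (h : B.rank < Fintype.card n) : ∃ v ≠ 0, B *ᵥ v = 0 := by
  have hdim := LinearMap.finrank_range_add_finrank_ker B.mulVecLin
  rw [Module.finrank_fintype_fun_eq_card, ← Matrix.rank] at hdim
  obtain ⟨v, hv, hv0⟩ := Submodule.exists_mem_ne_zero_of_ne_bot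
    (Submodule.finrank_eq_zero.not.1 (by omega : finrank K (LinearMap.ker B.mulVecLin) ≠ 0))
  exact ⟨v, hv0, hv⟩

variable {ι m n α : Type*}

def stackRows (A : ι → Matrix m n α) : Matrix (ι × m) n α :=
  of fun p => A p.1 p.2

theorem stackRows_mulVec_eq_zero_iff [Fintype n] [NonUnitalNonAssocSemiring α]
    (A : ι → Matrix m n α) (v : n → α) :
    stackRows A *ᵥ v = 0 ↔ ∀ i, A i *ᵥ v = 0 := by
  simp only [funext_iff, Prod.forall]
  rfl

theorem range_row_stackRows (A : ι → Matrix m n α) :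
    Set.range (stackRows A).row = ⋃ i, Set.range (A i).row := by
  ext v
  simp only [Set.mem_range, Set.mem_iUnion, Prod.exists]
  rfl

end Matrix

theorem rowSpace_eq_span_row {m n : ℕ} (A : Matrix (Fin m) (Fin n) ℝ) :
    rowSpace A = span ℝ (Set.range A.row) := by
  rw [rowSpace, range_mulVecLin, col_transpose]

theorem row_mem_rowSpace {m n : ℕ} (A : Matrix (Fin m) (Fin n) ℝ) (k : Fin m) :
    A k ∈ rowSpace A := by
  rw [rowSpace_eq_span_row]
  exact subset_span ⟨k, rfl⟩

theorem span_row_stackRows {ι : Type*} {m n : ℕ} (A : ι → Matrix (Fin m) (Fin n) ℝ) :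
    span ℝ (Set.range (stackRows A).row) = ⨆ i, rowSpace (A i) := by
  simp only [range_row_stackRows, span_iUnion, rowSpace_eq_span_row]

theorem exists_common_kernel_vector {d h : ℕ}
    (A : Fin h → Matrix (Fin d) (Fin d) ℝ)
    (hrank : ∑ i, Module.finrank ℝ ↥(rowSpace (A i)) ≤ d)
    (hrow : ∃ m m' : Fin h, m ≠ m' ∧ ∃ k : Fin d,
      (A m) k ≠ 0 ∧ (A m) k ∈ rowSpace (A m')) :
    ∃ x : Fin d → ℝ, x ≠ 0 ∧ ∀ i, (A i).mulVec x = 0 := by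
  obtain ⟨m, m', hne, k, hk0, hk⟩ := hrow
  have hinf : rowSpace (A m) ⊓ rowSpace (A m') ≠ ⊥ :=
    (Submodule.ne_bot_iff _).2 ⟨A m k, ⟨row_mem_rowSpace (A m) k, hk⟩, hk0⟩
  have hrank_lt : (stackRows A).rank < Fintype.card (Fin d) := by
    rw [rank_eq_finrank_span_row, span_row_stackRows, Fintype.card_fin]
    exact (finrank_iSup_lt_sum_of_inf_ne_bot _ hne hinf).trans_le hrank
  obtain ⟨x, hx0, hx⟩ := (stackRows A).exists_mulVec_eq_zero_of_rank_lt hrank_lt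
  exact ⟨x, hx0, (stackRows_mulVec_eq_zero_iff A x).1 hx⟩
end

section
/- Let Q₁, …, Q_h, K₁, …, K_h, V₁, …, V_h ∈ ℝ^{d×dh}, and assume for each i that Aᵢ := Qᵢ Kᵢᵀ is symmetric and that the row space of Vᵢᵀ is contained in the row space of Aᵢ. Let x ∈ ℝ^d be a nonzero vector with Aᵢ x = 0 for every i, and let W ∈ ℝ^{N×d} be the matrix each of whose rows equals xᵀ. Then W ≠ 0 and headᵢ(X + W) = headᵢ(X) for every i and every X ∈ ℝ^{N×d}, where headᵢ(X) = rowSoftmax(X Qᵢ Kᵢᵀ Xᵀ) · (X Vᵢ). -/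
/-! Write `A = Q Kᵀ` and `W = 𝟙 xᵀ`. Symmetry of `A` turns `A x = 0` into `xᵀ A = 0`, so the cross
terms `W A Xᵀ`, `X A Wᵀ`, `W A Wᵀ` of the scores vanish. The row space of `A` is orthogonal to its
kernel, hence contains the columns of `V` only if `xᵀ V = 0`, so `W V = 0` and the values are
unchanged too. -/

open Matrix

/-- Row-wise softmax of a square matrix. -/
noncomputable def rowSoftmax {N : ℕ} (S : Matrix (Fin N) (Fin N) ℝ) :
    Matrix (Fin N) (Fin N) ℝ :=
  Matrix.of fun j k => Real.exp (S j k) / ∑ l, Real.exp (S j l)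

/-- A self-attention head with query, key, value matrices `Q K V : ℝ^{d×dh}`,
applied to `X : ℝ^{N×d}`. -/
noncomputable def attnHead {d dh N : ℕ} (Q K V : Matrix (Fin d) (Fin dh) ℝ)
    (X : Matrix (Fin N) (Fin d) ℝ) : Matrix (Fin N) (Fin dh) ℝ :=
  rowSoftmax (X * Q * Kᵀ * Xᵀ) * (X * V)

theorem mulVec_eq_zero_of_rowSpace_le {m m' n : ℕ} {A : Matrix (Fin m) (Fin n) ℝ}
    {B : Matrix (Fin m') (Fin n) ℝ} (hBA : rowSpace B ≤ rowSpace A) {x : Fin n → ℝ}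
    (hx : A *ᵥ x = 0) : B *ᵥ x = 0 := by
  funext k
  obtain ⟨z, hz⟩ := hBA ⟨Pi.single k 1, rfl⟩
  rw [mulVecLin_apply, mulVecLin_apply] at hz
  calc (B *ᵥ x) k = (Bᵀ *ᵥ Pi.single k 1) ⬝ᵥ x := by
        rw [mulVec_transpose, single_one_vecMul]; rfl
    _ = z ⬝ᵥ (A *ᵥ x) := by rw [← hz, mulVec_transpose, dotProduct_mulVec]
    _ = 0 := by rw [hx, dotProduct_zero]

theorem attnHead_add_replicateRow {d dh N : ℕ} (Q K V : Matrix (Fin d) (Fin dh) ℝ)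
    (X : Matrix (Fin N) (Fin d) ℝ) {x : Fin d → ℝ} (hxA : x ᵥ* (Q * Kᵀ) = 0)
    (hAx : (Q * Kᵀ) *ᵥ x = 0) (hxV : x ᵥ* V = 0) :
    attnHead Q K V (X + replicateRow (Fin N) x) = attnHead Q K V X := by
  have hquery : (X + replicateRow (Fin N) x) * Q * Kᵀ = X * Q * Kᵀ := by
    rw [Matrix.mul_assoc, Matrix.mul_assoc X, Matrix.add_mul, ← replicateRow_vecMul, hxA,
      replicateRow_zero, add_zero]
  have hscores : X * Q * Kᵀ * (X + replicateRow (Fin N) x)ᵀ = X * Q * Kᵀ * Xᵀ := by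
    rw [transpose_add, transpose_replicateRow, Matrix.mul_add, ← replicateCol_mulVec,
      Matrix.mul_assoc X Q, ← mulVec_mulVec, hAx, mulVec_zero, replicateCol_zero, add_zero]
  have hvalues : (X + replicateRow (Fin N) x) * V = X * V := by
    rw [Matrix.add_mul, ← replicateRow_vecMul, hxV, replicateRow_zero, add_zero]
  rw [attnHead, attnHead, hquery, hscores, hvalues]

theorem constant_row_noise_invariant {d dh h N : ℕ} (hN : 0 < N)
    (Q K V : Fin h → Matrix (Fin d) (Fin dh) ℝ)
    (hsymm : ∀ i, (Q i * (K i)ᵀ)ᵀ = Q i * (K i)ᵀ)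
    (hrows : ∀ i, rowSpace (V i)ᵀ ≤ rowSpace (Q i * (K i)ᵀ))
    (x : Fin d → ℝ) (hx : x ≠ 0)
    (hker : ∀ i, (Q i * (K i)ᵀ).mulVec x = 0) :
    let W : Matrix (Fin N) (Fin d) ℝ := Matrix.of fun _ => x
    W ≠ 0 ∧ ∀ (i : Fin h) (X : Matrix (Fin N) (Fin d) ℝ),
      attnHead (Q i) (K i) (V i) (X + W) = attnHead (Q i) (K i) (V i) X := by
  have : Nonempty (Fin N) := ⟨⟨0, hN⟩⟩
  refine ⟨(replicateRow_eq_zero x).not.mpr hx, fun i X => ?_⟩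
  have hxA : x ᵥ* (Q i * (K i)ᵀ) = 0 := by rw [← mulVec_transpose, hsymm i, hker i]
  have hxV : x ᵥ* V i = 0 := by
    rw [← mulVec_transpose]
    exact mulVec_eq_zero_of_rowSpace_le (hrows i) (hker i)
  exact attnHead_add_replicateRow (Q i) (K i) (V i) X hxA (hker i) hxV
end
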